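/- Let G be a finite simple graph of order n, maximum degree Δ and minimum degree δ, and let k be an integer with -δ ≤ k ≤ Δ. If G contains a defensive k-alliance, then ⌈(δ+k+2)/2⌉ ≤ a_k(G) ≤ n - ⌊(δ-k)/2⌋. -/

import Mathlib

open Finset

variable {V : Type*}

/-- `degIn G S v` is the number of neighbors that `v` has in `S` (denoted `δ_S(v)`). -/
def degIn [Fintype V] [DecidableEq V] (G : SimpleGraph V) [DecidableRel G.Adj]
    (S : Finset V) (v : V) : ℕ :=
  (G.neighborFinset v ∩ S).card

/-- A nonempty set `S` is a defensive `k`-alliance in `G` if every vertex of `S` has at least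
`k` more neighbors inside `S` than outside. -/
def IsDefensiveKAlliance [Fintype V] [DecidableEq V] (G : SimpleGraph V) [DecidableRel G.Adj]
    (k : ℤ) (S : Finset V) : Prop :=
  S.Nonempty ∧ ∀ v ∈ S, (degIn G Sᶜ v : ℤ) + k ≤ (degIn G S v : ℤ)

/-- The defensive `k`-alliance number: minimum cardinality of a defensive `k`-alliance. -/
noncomputable def defensiveAllianceNum [Fintype V] [DecidableEq V] (G : SimpleGraph V)
    [DecidableRel G.Adj] (k : ℤ) : ℕ :=
  sInf {m : ℕ | ∃ S : Finset V, IsDefensiveKAlliance G k S ∧ S.card = m}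

/-!
A vertex `v` of an alliance `S` has at most `|S| - 1` neighbours in `S` and at least
`(deg v + k) / 2` of them, which gives the lower bound. Conversely, removing a set `X` with
`2|X| ≤ δ - k` from the vertex set leaves an alliance, since every remaining vertex loses at most
`|X|` neighbours to `X`; taking `|X| = ⌊(δ - k)/2⌋` gives the upper bound.
-/

section

variable [Fintype V] [DecidableEq V] (G : SimpleGraph V) [DecidableRel G.Adj]

lemma degIn_add_degIn_compl (S : Finset V) (v : V) :
    degIn G S v + degIn G Sᶜ v = G.degree v := by
  rw [degIn, degIn, ← sdiff_eq_inter_compl, card_inter_add_card_sdiff,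
    G.card_neighborFinset_eq_degree]

lemma degIn_le_card (S : Finset V) (v : V) : degIn G S v ≤ S.card :=
  card_le_card inter_subset_right

lemma degIn_lt_card {S : Finset V} {v : V} (hv : v ∈ S) : degIn G S v < S.card :=
  card_lt_card ⟨inter_subset_right, fun h ↦ G.loopless.irrefl v
    (G.mem_neighborFinset v v |>.mp (mem_inter.mp (h hv)).1)⟩

variable {G} {k : ℤ}

lemma IsDefensiveKAlliance.minDegree_add_two_le {S : Finset V}
    (hS : IsDefensiveKAlliance G k S) : (G.minDegree : ℤ) + k + 2 ≤ 2 * S.card := by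
  obtain ⟨⟨v, hv⟩, hall⟩ := hS
  have hsplit := degIn_add_degIn_compl G S v
  have hin := degIn_lt_card G hv
  have hδ := G.minDegree_le_degree v
  have hvS := hall v hv
  omega

lemma isDefensiveKAlliance_compl {X : Finset V} (hX : Xᶜ.Nonempty)
    (h : 2 * (X.card : ℤ) ≤ G.minDegree - k) : IsDefensiveKAlliance G k Xᶜ := by
  refine ⟨hX, fun v _ ↦ ?_⟩
  have hsplit := degIn_add_degIn_compl G Xᶜ v
  have hout := degIn_le_card G X v
  have hδ := G.minDegree_le_degree v
  rw [compl_compl] at hsplit ⊢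
  omega

lemma defensiveAllianceNum_le_card {S : Finset V} (hS : IsDefensiveKAlliance G k S) :
    defensiveAllianceNum G k ≤ S.card :=
  Nat.sInf_le ⟨S, hS, rfl⟩

lemma exists_isDefensiveKAlliance_card_eq (h : ∃ S, IsDefensiveKAlliance G k S) :
    ∃ S, IsDefensiveKAlliance G k S ∧ S.card = defensiveAllianceNum G k :=
  Nat.sInf_mem (s := {m | ∃ S, IsDefensiveKAlliance G k S ∧ S.card = m})
    (let ⟨S, hS⟩ := h; ⟨S.card, S, hS, rfl⟩)

lemma minDegree_add_two_le_two_mul_defensiveAllianceNum (h : ∃ S, IsDefensiveKAlliance G k S) :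
    (G.minDegree : ℤ) + k + 2 ≤ 2 * defensiveAllianceNum G k := by
  obtain ⟨S, hS, hcard⟩ := exists_isDefensiveKAlliance_card_eq h
  exact hcard ▸ hS.minDegree_add_two_le

lemma defensiveAllianceNum_add_le_card [Nonempty V] (hk : -(G.minDegree : ℤ) ≤ k) {t : ℕ}
    (ht : 2 * (t : ℤ) ≤ G.minDegree - k) : defensiveAllianceNum G k + t ≤ Fintype.card V := by
  have htn : t < Fintype.card V := by have := G.minDegree_lt_card; omega
  obtain ⟨X, -, hX⟩ := exists_subset_card_eq (s := univ) (by simpa using htn.le)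
  have hXc : Xᶜ.card = Fintype.card V - t := by rw [card_compl, hX]
  have hle := defensiveAllianceNum_le_card <|
    isDefensiveKAlliance_compl (G := G) (card_pos.mp (by omega)) (hX ▸ ht)
  omega

end

theorem defensiveAllianceNum_bounds_general [Fintype V] [DecidableEq V]
    (G : SimpleGraph V) [DecidableRel G.Adj] (k : ℤ)
    (hk1 : -(G.minDegree : ℤ) ≤ k)
    (hex : ∃ S : Finset V, IsDefensiveKAlliance G k S) :
    ⌈((G.minDegree : ℚ) + (k : ℚ) + 2) / 2⌉ ≤ (defensiveAllianceNum G k : ℤ) ∧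
      (defensiveAllianceNum G k : ℤ) ≤
        (Fintype.card V : ℤ) - ⌊((G.minDegree : ℚ) - (k : ℚ)) / 2⌋ := by
  obtain ⟨S, hS⟩ := hex
  have : Nonempty V := hS.1.to_subtype.map Subtype.val
  constructor
  · have h : ((G.minDegree + k + 2 : ℤ) : ℚ) ≤ ((2 * defensiveAllianceNum G k : ℤ) : ℚ) :=
      Int.cast_le.mpr (minDegree_add_two_le_two_mul_defensiveAllianceNum ⟨S, hS⟩)
    rw [Int.ceil_le, div_le_iff₀ two_pos]
    push_cast at h ⊢
    linarith
  · have hfloor := Int.floor_le (((G.minDegree : ℚ) - (k : ℚ)) / 2)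
    set t := ⌊((G.minDegree : ℚ) - (k : ℚ)) / 2⌋
    have haS := defensiveAllianceNum_le_card hS
    have hSn : S.card ≤ Fintype.card V := card_le_univ S
    rcases le_or_gt t 0 with ht0 | ht0
    · omega
    have h2t : 2 * t ≤ (G.minDegree : ℤ) - k := by
      exact_mod_cast (by push_cast; linarith : ((2 * t : ℤ) : ℚ) ≤ ((G.minDegree - k : ℤ) : ℚ))
    have hat := defensiveAllianceNum_add_le_card hk1 (t := t.toNat) (by omega)
    omega

/-- Theorem: for `-δ ≤ k ≤ Δ`, if `G` contains a defensive `k`-alliance then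
`⌈(δ+k+2)/2⌉ ≤ a_k(G) ≤ n - ⌊(δ-k)/2⌋`. -/
theorem defensiveAllianceNum_bounds [Fintype V] [DecidableEq V] [Nonempty V]
    (G : SimpleGraph V) [DecidableRel G.Adj] (k : ℤ)
    (hk1 : -(G.minDegree : ℤ) ≤ k) (hk2 : k ≤ (G.maxDegree : ℤ))
    (hex : ∃ S : Finset V, IsDefensiveKAlliance G k S) :
    ⌈((G.minDegree : ℚ) + (k : ℚ) + 2) / 2⌉ ≤ (defensiveAllianceNum G k : ℤ) ∧
      (defensiveAllianceNum G k : ℤ) ≤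
        (Fintype.card V : ℤ) - ⌊((G.minDegree : ℚ) - (k : ℚ)) / 2⌋ :=
  defensiveAllianceNum_bounds_general G k hk1 hex
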